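/- Let d > 0, let h : ℝ → ℝ and g : ℝ → ℝ be measurable functions with support contained in [−d,d], and define f : ℝ² → ℝ by f(x,y) = h((y−x)/2)·g((y+x)/2). If h is bounded and g is Lipschitz, then f is 1-absolutely continuous on ℝ², i.e. f ∈ 1-AC²(ℝ²,ℝ). -/

import Mathlib

/-!
On a 1-regular interval `[a,b]` (a square of side `s`) the endpoints differ by `(s,s)`, so the
argument `(y - x)/2` of `h` is the same at `a` and `b` while the argument `(y + x)/2` of `g`
moves by `s`. Hence `|f b - f a| ≤ M K s` and `|f b - f a|² ≤ M² K² ℒ²([a,b])`, which sums to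
the `1`-AC estimate.
-/

open MeasureTheory Metric Set Filter

noncomputable section

/-- The closed interval (box) `[a,b]` in `ℝ²`. -/
def box (a b : EuclideanSpace ℝ (Fin 2)) : Set (EuclideanSpace ℝ (Fin 2)) :=
  {x | ∀ ν, a ν ≤ x ν ∧ x ν ≤ b ν}

/-- `f` is 1-absolutely continuous on `ℝ²`: for every `ε > 0` there is `δ > 0` such that
for every finite collection of pairwise disjoint 1-regular intervals (squares)
`[aᵢ,bᵢ] ⊆ ℝ²`, `∑ ℒ²([aᵢ,bᵢ]) < δ` implies `∑ |f(bᵢ) − f(aᵢ)|² < ε`. -/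
def OneAC (f : EuclideanSpace ℝ (Fin 2) → ℝ) : Prop :=
  ∀ ε > 0, ∃ δ > 0, ∀ (k : ℕ) (a b : Fin k → EuclideanSpace ℝ (Fin 2)),
    (∀ i, ∀ ν, a i ν ≤ b i ν) →
    (Pairwise fun i j => Disjoint (box (a i) (b i)) (box (a j) (b j))) →
    (∀ i, (⨆ ν, |a i ν - b i ν|) ^ 2 ≤ (volume (box (a i) (b i))).toReal) →
    ∑ i, (volume (box (a i) (b i))).toReal < δ →
    ∑ i, |f (b i) - f (a i)| ^ 2 < ε

lemma volume_box_toReal (a b : EuclideanSpace ℝ (Fin 2)) (hab : ∀ ν, a ν ≤ b ν) :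
    (volume (box a b)).toReal = (b 0 - a 0) * (b 1 - a 1) := by
  have hbox : box a b = (MeasurableEquiv.toLp 2 (Fin 2 → ℝ)).symm ⁻¹'
      (univ.pi fun ν => Icc (a ν) (b ν)) := by
    ext x
    simp [box, Icc]
  rw [hbox, (EuclideanSpace.volume_preserving_symm_measurableEquiv_toLp (Fin 2)).measure_preimage
    (MeasurableSet.univ_pi fun ν => measurableSet_Icc).nullMeasurableSet, volume_pi_pi]
  simp only [Real.volume_Icc, Fin.prod_univ_two]
  rw [← ENNReal.ofReal_mul (sub_nonneg.2 (hab 0)), ENNReal.toReal_ofReal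
    (mul_nonneg (sub_nonneg.2 (hab 0)) (sub_nonneg.2 (hab 1)))]

lemma box_sides_eq_of_regular {a b : EuclideanSpace ℝ (Fin 2)} (hab : ∀ ν, a ν ≤ b ν)
    (hreg : (⨆ ν, |a ν - b ν|) ^ 2 ≤ (volume (box a b)).toReal) :
    b 0 - a 0 = b 1 - a 1 := by
  have hside : ∀ ν, b ν - a ν ≤ ⨆ ν, |a ν - b ν| := fun ν => by
    rw [← abs_of_nonneg (sub_nonneg.2 (hab ν)), abs_sub_comm]
    exact le_ciSup (finite_range fun ν => |a ν - b ν|).bddAbove ν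
  rw [volume_box_toReal a b hab] at hreg
  have h0 := sub_nonneg.2 (hab 0)
  have h1 := sub_nonneg.2 (hab 1)
  nlinarith [hside 0, hside 1, sq_nonneg (b 0 - a 0 - (b 1 - a 1))]

lemma oneAC_of_sq_le_mul_volume {f : EuclideanSpace ℝ (Fin 2) → ℝ} (C : ℝ)
    (hC : ∀ a b : EuclideanSpace ℝ (Fin 2), (∀ ν, a ν ≤ b ν) →
      (⨆ ν, |a ν - b ν|) ^ 2 ≤ (volume (box a b)).toReal →
      |f b - f a| ^ 2 ≤ C * (volume (box a b)).toReal) :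
    OneAC f := by
  intro ε hε
  refine ⟨ε / (|C| + 1), by positivity, fun k a b hab _ hreg hsum => ?_⟩
  have hvol : 0 ≤ ∑ i, (volume (box (a i) (b i))).toReal :=
    Finset.sum_nonneg fun i _ => ENNReal.toReal_nonneg
  calc ∑ i, |f (b i) - f (a i)| ^ 2
      ≤ ∑ i, C * (volume (box (a i) (b i))).toReal :=
        Finset.sum_le_sum fun i _ => hC _ _ (hab i) (hreg i)
    _ = C * ∑ i, (volume (box (a i) (b i))).toReal := (Finset.mul_sum ..).symm
    _ ≤ |C| * (ε / (|C| + 1)) :=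
        (mul_le_mul_of_nonneg_right (le_abs_self C) hvol).trans
          (mul_le_mul_of_nonneg_left hsum.le (abs_nonneg C))
    _ < ε := by
        rw [mul_div_assoc', div_lt_iff₀ (by positivity)]
        nlinarith

lemma abs_mul_sub_mul_le {h g : ℝ → ℝ} {M : ℝ} {K : NNReal} (hM : ∀ s, |h s| ≤ M)
    (hg : LipschitzWith K g) (u v w : ℝ) :
    |h u * g v - h u * g w| ≤ M * (K * |v - w|) := by
  rw [← mul_sub, abs_mul, ← Real.dist_eq, ← Real.dist_eq]
  exact mul_le_mul (hM u) (hg.dist_le_mul v w) dist_nonneg ((abs_nonneg _).trans (hM u))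

theorem oneAC_of_bounded_mul_lipschitz_general
    (h g : ℝ → ℝ)
    (hbdd : ∃ M : ℝ, ∀ s, |h s| ≤ M)
    (glip : ∃ K : NNReal, LipschitzWith K g)
    (f : EuclideanSpace ℝ (Fin 2) → ℝ)
    (hf : ∀ p : EuclideanSpace ℝ (Fin 2), f p = h ((p 1 - p 0) / 2) * g ((p 1 + p 0) / 2)) :
    OneAC f := by
  obtain ⟨M, hM⟩ := hbdd
  obtain ⟨K, hK⟩ := glip
  refine oneAC_of_sq_le_mul_volume (M ^ 2 * K ^ 2) fun a b hab hreg => ?_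
  have hsq := box_sides_eq_of_regular hab hreg
  have hdiag : (b 1 - b 0) / 2 = (a 1 - a 0) / 2 := by linarith
  have hshift : |(b 1 + b 0) / 2 - (a 1 + a 0) / 2| = b 0 - a 0 := by
    rw [abs_of_nonneg] <;> linarith [hab 0]
  have hbound : |f b - f a| ≤ M * (K * (b 0 - a 0)) := by
    rw [hf, hf, hdiag, ← hshift]
    exact abs_mul_sub_mul_le hM hK _ _ _
  calc |f b - f a| ^ 2 ≤ (M * (K * (b 0 - a 0))) ^ 2 := pow_le_pow_left₀ (abs_nonneg _) hbound 2
    _ = M ^ 2 * K ^ 2 * (volume (box a b)).toReal := by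
        rw [volume_box_toReal a b hab, ← hsq]; ring

/-- If `h : ℝ → ℝ` and `g : ℝ → ℝ` are measurable with support contained in `[−d,d]`,
`h` is bounded, `g` is Lipschitz, and `f(x,y) = h((y−x)/2)·g((y+x)/2)`, then
`f ∈ 1-AC²(ℝ²,ℝ)`. -/
theorem oneAC_of_bounded_mul_lipschitz (d : ℝ) (hd : 0 < d)
    (h g : ℝ → ℝ) (hmeas : Measurable h) (gmeas : Measurable g)
    (hsupp : Function.support h ⊆ Set.Icc (-d) d)
    (gsupp : Function.support g ⊆ Set.Icc (-d) d)
    (hbdd : ∃ M : ℝ, ∀ s, |h s| ≤ M)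
    (glip : ∃ K : NNReal, LipschitzWith K g)
    (f : EuclideanSpace ℝ (Fin 2) → ℝ)
    (hf : ∀ p : EuclideanSpace ℝ (Fin 2), f p = h ((p 1 - p 0) / 2) * g ((p 1 + p 0) / 2)) :
    OneAC f :=
  oneAC_of_bounded_mul_lipschitz_general h g hbdd glip f hf
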